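/- arXiv:2603.13826 — 2 statements merged into one kernel-verified Lean document; each statement's English description precedes it below -/
import Mathlib

section
/- For the unnormalized Rényi entropy R_{u,α}(x; C) = (1/(1-α))·(C^{1-α}‖x‖_α^α - ‖x‖₁) with 0 < α, α ≠ 1, C > 0, and x ∈ R^n with ‖x‖_∞ ≤ C, the limit as α → 0⁺ equals C‖x‖₀ - ‖x‖₁. -/
open Finset Real Filter

noncomputable def spt {n : ℕ} (x : Fin n → ℝ) : Finset (Fin n) :=
  Finset.univ.filter (fun i => x i ≠ 0)

/-- Unnormalized Rényi entropy
`R_{u,α}(x; C) = (1/(1-α))·(∑_i C(|x_i|/C)^α − ‖x‖₁)`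
(the convention `0^α = 0` for `α > 0` is automatic for `Real.rpow`). -/
noncomputable def Rua {n : ℕ} (α : ℝ) (x : Fin n → ℝ) (C : ℝ) : ℝ :=
  (1 / (1 - α)) * ((∑ i, C * (|x i| / C) ^ α) - ∑ i, |x i|)

/-! As `α → 0⁺`, each term `C (|xᵢ|/C)^α` tends to `C` when `xᵢ ≠ 0` (continuity of `α ↦ a^α` at
`0` for `a ≠ 0`) and is identically `0` when `xᵢ = 0`, while the prefactor `1/(1-α)` tends to `1`. -/

open Topology

theorem tendsto_rpow_nhdsGT_zero (a : ℝ) :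
    Tendsto (fun α : ℝ => a ^ α) (𝓝[>] 0) (𝓝 (if a = 0 then 0 else 1)) := by
  split_ifs with ha
  · subst ha
    refine tendsto_const_nhds.congr' ?_
    filter_upwards [self_mem_nhdsWithin] with α (hα : 0 < α)
    exact (zero_rpow hα.ne').symm
  · simpa using ((continuousAt_const_rpow ha).tendsto (x := 0)).mono_left nhdsWithin_le_nhds

theorem tendsto_mul_abs_div_rpow_nhdsGT_zero (C t : ℝ) :
    Tendsto (fun α : ℝ => C * (|t| / C) ^ α) (𝓝[>] 0) (𝓝 (if t = 0 then 0 else C)) := by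
  rcases eq_or_ne C 0 with rfl | hC
  · simp
  · simpa [hC] using (tendsto_rpow_nhdsGT_zero (|t| / C)).const_mul C

theorem sum_ite_eq_zero_eq_mul_card_spt {n : ℕ} (x : Fin n → ℝ) (C : ℝ) :
    ∑ i, (if x i = 0 then 0 else C) = C * (spt x).card := by
  simp_rw [spt, Finset.natCast_card_filter, Finset.mul_sum, ite_not, mul_ite, mul_one, mul_zero]

theorem tendsto_one_div_one_sub_nhdsGT_zero :
    Tendsto (fun α : ℝ => 1 / (1 - α)) (𝓝[>] 0) (𝓝 1) := by
  have h : ContinuousAt (fun α : ℝ => 1 / (1 - α)) 0 :=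
    continuousAt_const.div (continuousAt_const.sub continuousAt_id) (by norm_num)
  simpa using h.tendsto.mono_left nhdsWithin_le_nhds

theorem Rua_tendsto_zero_general {n : ℕ} (x : Fin n → ℝ) (C : ℝ) :
    Filter.Tendsto (fun α : ℝ => Rua α x C)
      (nhdsWithin 0 (Set.Ioi 0))
      (nhds (C * ((spt x).card : ℝ) - ∑ i, |x i|)) := by
  have hsum : Tendsto (fun α : ℝ => ∑ i, C * (|x i| / C) ^ α) (𝓝[>] 0)
      (𝓝 (C * (spt x).card)) := by
    rw [← sum_ite_eq_zero_eq_mul_card_spt]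
    exact tendsto_finsetSum _ fun i _ => tendsto_mul_abs_div_rpow_nhdsGT_zero C (x i)
  simpa [Rua] using tendsto_one_div_one_sub_nhdsGT_zero.mul (hsum.sub_const (∑ i, |x i|))

/-- As α → 0⁺, the unnormalized Rényi entropy tends to `C‖x‖₀ − ‖x‖₁`. -/
theorem Rua_tendsto_zero {n : ℕ} (x : Fin n → ℝ) (C : ℝ) (hC : 0 < C)
    (hbound : ∀ i, |x i| ≤ C) :
    Filter.Tendsto (fun α : ℝ => Rua α x C)
      (nhdsWithin 0 (Set.Ioi 0))
      (nhds (C * ((spt x).card : ℝ) - ∑ i, |x i|)) :=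
  Rua_tendsto_zero_general x C
end

section
/- (RIP cross-term bound) Suppose A ∈ R^{m×n} satisfies the restricted isometry property of order 2k with constant δ ∈ (0,1): (1-δ)‖u‖₂² ≤ ‖Au‖₂² ≤ (1+δ)‖u‖₂² for all 2k-sparse u. Then for all u, v ∈ R^n with disjoint supports and |supp(u)| + |supp(v)| ≤ 2k, one has |⟨Au, Av⟩| ≤ δ‖u‖₂‖v‖₂. -/
open Finset Real Matrix

/-- A vector is s-sparse if it has at most s nonzero entries. -/
def IsSparse {n : ℕ} (s : ℕ) (u : Fin n → ℝ) : Prop :=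
  (Finset.univ.filter (fun i => u i ≠ 0)).card ≤ s

/-- Euclidean norm as `√(∑ uᵢ²)`. -/
noncomputable def l2norm {n : ℕ} (u : Fin n → ℝ) : ℝ :=
  Real.sqrt (∑ i, (u i) ^ 2)

/-- `A` satisfies the RIP of order `s` with constant `δ`. -/
def SatisfiesRIP {m n : ℕ} (A : Matrix (Fin m) (Fin n) ℝ) (s : ℕ) (δ : ℝ) : Prop :=
  ∀ u : Fin n → ℝ, IsSparse s u →
    (1 - δ) * (l2norm u) ^ 2 ≤ (l2norm (A.mulVec u)) ^ 2 ∧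
    (l2norm (A.mulVec u)) ^ 2 ≤ (1 + δ) * (l2norm u) ^ 2

/-!
For orthogonal `x, y` with `a = ‖x‖`, `b = ‖y‖`, both vectors `b • x ± a • y` have squared norm
`2 a² b²`, while polarization gives `‖T (b • x + a • y)‖² - ‖T (b • x - a • y)‖² = 4 a b ⟪T x, T y⟫`.
The upper RIP bound on the first vector and the lower one on the second give
`a b ⟪T x, T y⟫ ≤ δ a² b²`; replacing `y` by `-y` gives the other sign. Disjoint supports make
`u, v` orthogonal, and the RIP applies to every `s • u + t • v` since it is supported on
`supp u ∪ supp v`.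
-/

open scoped InnerProductSpace

section NearIsometry

variable {E F : Type*} [NormedAddCommGroup E] [InnerProductSpace ℝ E]
  [NormedAddCommGroup F] [InnerProductSpace ℝ F]

def IsNearIsometryOnSpan (T : E →ₗ[ℝ] F) (δ : ℝ) (x y : E) : Prop :=
  ∀ s t : ℝ, (1 - δ) * ‖s • x + t • y‖ ^ 2 ≤ ‖T (s • x + t • y)‖ ^ 2 ∧
    ‖T (s • x + t • y)‖ ^ 2 ≤ (1 + δ) * ‖s • x + t • y‖ ^ 2

theorem IsNearIsometryOnSpan.neg_right {T : E →ₗ[ℝ] F} {δ : ℝ} {x y : E}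
    (hT : IsNearIsometryOnSpan T δ x y) : IsNearIsometryOnSpan T δ x (-y) := by
  intro s t
  simpa only [smul_neg, ← neg_smul] using hT s (-t)

theorem norm_smul_add_smul_sq_of_inner_eq_zero {x y : E} (hxy : ⟪x, y⟫_ℝ = 0) (s t : ℝ) :
    ‖s • x + t • y‖ ^ 2 = s ^ 2 * ‖x‖ ^ 2 + t ^ 2 * ‖y‖ ^ 2 := by
  rw [norm_add_sq_real, real_inner_smul_left, real_inner_smul_right, hxy, norm_smul, norm_smul,
    Real.norm_eq_abs, Real.norm_eq_abs, mul_pow, mul_pow, sq_abs, sq_abs]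
  ring

theorem inner_apply_le_of_isNearIsometryOnSpan {T : E →ₗ[ℝ] F} {δ : ℝ} {x y : E}
    (hxy : ⟪x, y⟫_ℝ = 0) (hT : IsNearIsometryOnSpan T δ x y) :
    ⟪T x, T y⟫_ℝ ≤ δ * ‖x‖ * ‖y‖ := by
  have hpolar : ‖T (‖y‖ • x + ‖x‖ • y)‖ ^ 2 - ‖T (‖y‖ • x + (-‖x‖) • y)‖ ^ 2 =
      4 * (‖x‖ * ‖y‖) * ⟪T x, T y⟫_ℝ := by
    simp only [map_add, map_sub, map_smul, neg_smul, ← sub_eq_add_neg, norm_add_sq_real,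
      norm_sub_sq_real, real_inner_smul_left, real_inner_smul_right]
    ring
  have hplus := (hT ‖y‖ ‖x‖).2
  have hminus := (hT ‖y‖ (-‖x‖)).1
  rw [norm_smul_add_smul_sq_of_inner_eq_zero hxy] at hplus hminus
  have hab : ‖x‖ * ‖y‖ * ⟪T x, T y⟫_ℝ ≤ ‖x‖ * ‖y‖ * (δ * ‖x‖ * ‖y‖) := by linarith
  rcases (mul_nonneg (norm_nonneg x) (norm_nonneg y)).eq_or_lt with hab0 | hab0
  · rcases mul_eq_zero.mp hab0.symm with hx | hy
    · simp [norm_eq_zero.mp hx]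
    · simp [norm_eq_zero.mp hy]
  · exact le_of_mul_le_mul_left hab hab0

theorem abs_inner_apply_le_of_isNearIsometryOnSpan {T : E →ₗ[ℝ] F} {δ : ℝ} {x y : E}
    (hxy : ⟪x, y⟫_ℝ = 0) (hT : IsNearIsometryOnSpan T δ x y) :
    |⟪T x, T y⟫_ℝ| ≤ δ * ‖x‖ * ‖y‖ := by
  have hneg := inner_apply_le_of_isNearIsometryOnSpan (by rw [inner_neg_right, hxy, neg_zero])
    hT.neg_right
  rw [map_neg, inner_neg_right, norm_neg] at hneg
  exact abs_le.mpr ⟨by linarith, inner_apply_le_of_isNearIsometryOnSpan hxy hT⟩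

end NearIsometry

theorem IsSparse.smul_add_smul {n s : ℕ} {u v : Fin n → ℝ}
    (hcard : (univ.filter (fun i => u i ≠ 0)).card + (univ.filter (fun i => v i ≠ 0)).card ≤ s)
    (a b : ℝ) : IsSparse s (a • u + b • v) := by
  refine le_trans (card_le_card fun i => ?_) ((card_union_le _ _).trans hcard)
  simp only [mem_filter, mem_univ, true_and, mem_union, Pi.add_apply, Pi.smul_apply, smul_eq_mul]
  contrapose!
  rintro ⟨hu, hv⟩
  simp [hu, hv]

theorem l2norm_eq_norm_toLp {n : ℕ} (u : Fin n → ℝ) :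
    l2norm u = ‖WithLp.toLp 2 u‖ := by
  simp [l2norm, EuclideanSpace.norm_eq]

theorem rip_cross_term_general {m n k : ℕ} (A : Matrix (Fin m) (Fin n) ℝ)
    (δ : ℝ) (hRIP : SatisfiesRIP A (2 * k) δ)
    (u v : Fin n → ℝ)
    (hdisj : ∀ i, u i = 0 ∨ v i = 0)
    (hcard : (Finset.univ.filter (fun i => u i ≠ 0)).card +
             (Finset.univ.filter (fun i => v i ≠ 0)).card ≤ 2 * k) :
    |∑ j, A.mulVec u j * A.mulVec v j| ≤ δ * l2norm u * l2norm v := by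
  have horth : ⟪WithLp.toLp 2 u, WithLp.toLp 2 v⟫_ℝ = 0 :=
    Finset.sum_eq_zero fun i _ => by rcases hdisj i with h | h <;> simp [h]
  have hnear : IsNearIsometryOnSpan (toEuclideanLin A) δ (WithLp.toLp 2 u) (WithLp.toLp 2 v) := by
    intro s t
    simpa [l2norm_eq_norm_toLp, ← WithLp.toLp_smul, ← WithLp.toLp_add]
      using hRIP _ (IsSparse.smul_add_smul hcard s t)
  have hbound := abs_inner_apply_le_of_isNearIsometryOnSpan horth hnear
  simpa [l2norm_eq_norm_toLp, EuclideanSpace.inner_toLp_toLp, dotProduct, mul_comm] using hbound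

/-- RIP cross-term bound: if `A` satisfies the 2k-RIP with constant δ ∈ (0,1),
then for vectors u, v with disjoint supports and total support size at most 2k,
`|⟨Au, Av⟩| ≤ δ‖u‖₂‖v‖₂`. -/
theorem rip_cross_term {m n k : ℕ} (A : Matrix (Fin m) (Fin n) ℝ)
    (δ : ℝ) (hδ0 : 0 < δ) (hδ1 : δ < 1) (hRIP : SatisfiesRIP A (2 * k) δ)
    (u v : Fin n → ℝ)
    (hdisj : ∀ i, u i = 0 ∨ v i = 0)
    (hcard : (Finset.univ.filter (fun i => u i ≠ 0)).card +
             (Finset.univ.filter (fun i => v i ≠ 0)).card ≤ 2 * k) :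
    |∑ j, A.mulVec u j * A.mulVec v j| ≤ δ * l2norm u * l2norm v :=
  rip_cross_term_general A δ hRIP u v hdisj hcard
end
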